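/- Let G be a group with rational derived series G = G_r⁽⁰⁾ ⊇ G_r⁽¹⁾ ⊇ ⋯, where G_r⁽ⁿ⁺¹⁾ = {g ∈ G_r⁽ⁿ⁾ : g^k ∈ [G_r⁽ⁿ⁾, G_r⁽ⁿ⁾] for some k ≥ 1}. Then each quotient G/G_r⁽ⁿ⁾ is PTFA: each successive quotient G_r⁽ⁿ⁾/G_r⁽ⁿ⁺¹⁾ is torsion-free abelian and each G_r⁽ⁿ⁾ is normal in G. -/
import Mathlib


/-- A group `Γ` is poly-torsion-free-abelian (PTFA) if there is a finite normal series
`1 = Γ₀ ⊆ Γ₁ ⊆ ⋯ ⊆ Γₙ = Γ` such that each `Γᵢ` is normal in `Γᵢ₊₁` and each quotient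
`Γᵢ₊₁/Γᵢ` is torsion-free abelian.  We express normality of `Γᵢ` in `Γᵢ₊₁`, abelianness of
the quotient (commutators of elements of `Γᵢ₊₁` lie in `Γᵢ`) and torsion-freeness of the
quotient (`g^k ∈ Γᵢ` with `k ≥ 1` implies `g ∈ Γᵢ`) elementwise. -/
def IsPTFA (Γ : Type*) [Group Γ] : Prop :=
  ∃ (n : ℕ) (s : Fin (n + 1) → Subgroup Γ),
    s 0 = ⊥ ∧ s (Fin.last n) = ⊤ ∧
    (∀ i : Fin n, s i.castSucc ≤ s i.succ) ∧
    (∀ i : Fin n, ∀ g ∈ s i.succ, ∀ h ∈ s i.castSucc, g * h * g⁻¹ ∈ s i.castSucc) ∧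
    (∀ i : Fin n, ∀ g ∈ s i.succ, ∀ h ∈ s i.succ, g * h * g⁻¹ * h⁻¹ ∈ s i.castSucc) ∧
    (∀ i : Fin n, ∀ g ∈ s i.succ, ∀ k : ℕ, 1 ≤ k → g ^ k ∈ s i.castSucc → g ∈ s i.castSucc)


/-- The rational derived series of a group `G` is given by `G_r⁽⁰⁾ = G` and
`G_r⁽ⁿ⁺¹⁾ = {g ∈ G_r⁽ⁿ⁾ : ∃ k ≥ 1, g^k ∈ [G_r⁽ⁿ⁾, G_r⁽ⁿ⁾]}`.  We encode it as a sequence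
of subgroups `s : ℕ → Subgroup G` whose underlying sets satisfy this recursion (that these
sets are indeed subgroups is a theorem of Harvey).  Then each `s n` is normal in `G`, each
successive quotient `s n / s (n+1)` is torsion-free abelian (commutators of elements of
`s n` lie in `s (n+1)`, and `g^k ∈ s (n+1)` with `k ≥ 1`, `g ∈ s n` forces
`g ∈ s (n+1)`), and each quotient `G / s n` is PTFA. -/
theorem rational_derived_series_quotients_ptfa
    {G : Type*} [Group G] (s : ℕ → Subgroup G)
    (hs0 : s 0 = ⊤)
    (hsrec : ∀ n, ∀ g : G,
      g ∈ s (n + 1) ↔ g ∈ s n ∧ ∃ k : ℕ, 1 ≤ k ∧ g ^ k ∈ ⁅s n, s n⁆) :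
    ∀ n : ℕ,
      (s n).Normal ∧
      s (n + 1) ≤ s n ∧
      (∀ g ∈ s n, ∀ h ∈ s n, g * h * g⁻¹ * h⁻¹ ∈ s (n + 1)) ∧
      (∀ g ∈ s n, ∀ k : ℕ, 1 ≤ k → g ^ k ∈ s (n + 1) → g ∈ s (n + 1)) ∧
      (∀ hN : (s n).Normal, IsPTFA (G ⧸ s n)) := by
  have hstep : ∀ n, s (n + 1) ≤ s n := fun n g hg => ((hsrec n g).mp hg).1
  have hanti : ∀ {a b : ℕ}, a ≤ b → s b ≤ s a := fun {a b} hab =>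
    antitone_nat_of_succ_le hstep hab
  have hnormal : ∀ n, (s n).Normal := by
    intro n
    induction n with
    | zero => rw [hs0]; infer_instance
    | succ n ih =>
      constructor
      intro x hx c
      obtain ⟨hx1, k, hk, hxk⟩ := (hsrec n x).mp hx
      refine (hsrec n _).mpr ⟨ih.conj_mem x hx1 c, k, hk, ?_⟩
      haveI := ih
      rw [conj_pow]
      exact (Subgroup.commutator_normal (s n) (s n)).conj_mem _ hxk c
  have hcomm : ∀ n, ∀ g ∈ s n, ∀ h ∈ s n, g * h * g⁻¹ * h⁻¹ ∈ s (n + 1) := by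
    intro n g hg h hh
    refine (hsrec n _).mpr ⟨mul_mem (mul_mem (mul_mem hg hh) (inv_mem hg)) (inv_mem hh),
      1, le_refl 1, ?_⟩
    rw [pow_one]
    have := Subgroup.commutator_mem_commutator hg hh
    rwa [commutatorElement_def] at this
  have hroot : ∀ n, ∀ g ∈ s n, ∀ k : ℕ, 1 ≤ k → g ^ k ∈ s (n + 1) → g ∈ s (n + 1) := by
    intro n g hg k hk hgk
    obtain ⟨_, m, hm, hgkm⟩ := (hsrec n _).mp hgk
    refine (hsrec n g).mpr ⟨hg, k * m, Nat.mul_pos hk hm, ?_⟩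
    rw [pow_mul]
    exact hgkm
  intro n
  refine ⟨hnormal n, hstep n, hcomm n, hroot n, ?_⟩
  intro hN
  refine ⟨n, fun i => (s (n - (i : ℕ))).map (QuotientGroup.mk' (s n)), ?_, ?_, ?_, ?_, ?_, ?_⟩
  · simp only [Fin.val_zero, Nat.sub_zero]
    rw [Subgroup.map_eq_bot_iff, QuotientGroup.ker_mk']
  · simp only [Fin.val_last, Nat.sub_self, hs0]
    exact Subgroup.map_top_of_surjective _ (QuotientGroup.mk'_surjective _)
  · intro i
    apply Subgroup.map_mono
    apply hanti
    have hi := i.isLt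
    simp only [Fin.val_succ, Fin.coe_castSucc]
    omega
  all_goals
    have key : ∀ i : Fin n, n - ((i.succ : Fin (n + 1)) : ℕ) + 1
        = n - ((i.castSucc : Fin (n + 1)) : ℕ) := by
      intro i
      have hi := i.isLt
      simp only [Fin.val_succ, Fin.coe_castSucc]
      omega
  · intro i g hg h hh
    simp only [] at hg hh ⊢
    rw [← key i] at hh ⊢
    obtain ⟨x, hx, rfl⟩ := hg
    obtain ⟨y, hy, rfl⟩ := hh
    exact ⟨x * y * x⁻¹, (hnormal _).conj_mem y hy x, by simp⟩
  · intro i g hg h hh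
    simp only [] at hg hh ⊢
    rw [← key i]
    obtain ⟨x, hx, rfl⟩ := hg
    obtain ⟨y, hy, rfl⟩ := hh
    exact ⟨x * y * x⁻¹ * y⁻¹, hcomm _ x hx y hy, by simp⟩
  · intro i g hg k hk hgk
    simp only [] at hg hgk ⊢
    rw [← key i] at hgk ⊢
    obtain ⟨x, hx, rfl⟩ := hg
    rw [← map_pow] at hgk
    obtain ⟨y, hy, hyx⟩ := hgk
    have hz : y⁻¹ * x ^ k ∈ s n := QuotientGroup.eq.mp hyx
    have hxk : x ^ k ∈ s (n - ((i.succ : Fin (n + 1)) : ℕ) + 1) := by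
      have hrw : x ^ k = y * (y⁻¹ * x ^ k) := by group
      rw [hrw]
      refine mul_mem hy (hanti ?_ hz)
      have hi := i.isLt
      simp only [Fin.val_succ]
      omega
    exact ⟨x, hroot _ x hx k hk hxk, rfl⟩
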